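/- Let (Ω,Σ,μ) be σ-finite with the finite subset property, X separable, and (e^{t𝓐})_{t≥0} a multiplication semigroup on L^p(Ω,X) with pointwise semigroups (e^{tA(s)})_{t≥0}. Then for M > 0: ‖e^{t𝓐}‖ ≤ M for all t ≥ 0 if and only if there is a null set N such that ‖e^{tA(s)}‖ ≤ M for all s ∈ Ω∖N and all t ≥ 0. -/

import Mathlib

open MeasureTheory Filter Topology ENNReal
open scoped NNReal

/-!
A multiplication operator `S` by `B : Ω → (X →L Y)` on `Lp` has norm `ess sup ‖B s‖`. Testing `S`
on the functions `x • 𝟙_W`, for `W` of finite measure, shows `‖B s x‖ ≤ ‖S‖ ‖x‖` for a.e. `s`;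
running `x` over a countable dense subset of `X` gives `‖B s‖ ≤ ‖S‖` a.e. For the semigroup, the
countably many null sets belonging to rational times are collected into one, and for `s` outside
it the bound passes to every `t ≥ 0` since `t ↦ A t s x` is continuous on `[0, ∞)`.
-/

open Set in
theorem ContinuousOn.mapsTo_Ici_of_dense {α Y : Type*} [LinearOrder α] [TopologicalSpace α]
    [OrderTopology α] [DenselyOrdered α] [NoMaxOrder α] [TopologicalSpace Y]
    {f : α → Y} {a : α} {D : Set α} {C : Set Y} (hf : ContinuousOn f (Ici a)) (hD : Dense D)
    (hC : IsClosed C) (h : MapsTo f (D ∩ Ioi a) C) : MapsTo f (Ici a) C := by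
  have hclosure : Ici a ⊆ closure (Ioi a ∩ D) := by
    rw [← closure_Ioi a]
    exact closure_minimal (hD.open_subset_closure_inter isOpen_Ioi) isClosed_closure
  intro t ht
  rw [← hC.closure_eq]
  exact ((hf t ht).mono Ioi_subset_Ici_self |>.mono inter_subset_left).mem_closure
    (hclosure ht) (h.mono_left (inter_comm _ _).subset)

theorem ContinuousLinearMap.opNorm_le_of_dense {𝕜 X Y : Type*} [NontriviallyNormedField 𝕜]
    [SeminormedAddCommGroup X] [NormedSpace 𝕜 X] [SeminormedAddCommGroup Y] [NormedSpace 𝕜 Y]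
    (L : X →L[𝕜] Y) {D : Set X} (hD : Dense D) {M : ℝ} (hM : 0 ≤ M)
    (h : ∀ x ∈ D, ‖L x‖ ≤ M * ‖x‖) : ‖L‖ ≤ M :=
  L.opNorm_le_bound hM <| hD.induction h <|
    isClosed_le (continuous_norm.comp L.continuous) (continuous_const.mul continuous_norm)

theorem ae_restrict_nnnorm_le_of_eLpNorm_indicator_le {Ω Y : Type*} [MeasurableSpace Ω]
    {μ : Measure Ω} [NormedAddCommGroup Y] {p : ℝ≥0∞} (hp : p ≠ 0) {g : Ω → Y}
    (hg : StronglyMeasurable g) {E : Set Ω} (hE : MeasurableSet E) (hμE : μ E ≠ ∞) {C : ℝ≥0}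
    (h : ∀ W ⊆ E, MeasurableSet W → eLpNorm (W.indicator g) p μ ≤ C * μ W ^ (1 / p.toReal)) :
    ∀ᵐ s ∂μ.restrict E, ‖g s‖₊ ≤ C := by
  rw [ae_le_const_iff_forall_gt_measure_zero]
  intro b hCb
  set W := {s | b ≤ ‖g s‖₊} ∩ E
  have hW : MeasurableSet W := (measurableSet_le measurable_const hg.nnnorm.measurable).inter hE
  rw [Measure.restrict_apply' hE]
  by_contra hW0
  have hWfin : μ W ≠ ∞ := measure_ne_top_of_subset Set.inter_subset_right hμE
  have hlower : (b : ℝ≥0∞) * μ W ^ (1 / p.toReal) ≤ eLpNorm (W.indicator g) p μ := by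
    calc (b : ℝ≥0∞) * μ W ^ (1 / p.toReal) = eLpNorm (W.indicator fun _ => (b : ℝ)) p μ := by
          rw [eLpNorm_indicator_const' hW hW0 hp]; simp
      _ ≤ eLpNorm (W.indicator g) p μ := by
          refine eLpNorm_mono fun s => ?_
          by_cases hs : s ∈ W
          · simpa [hs] using NNReal.coe_le_coe.2 hs.1
          · simp [hs]
  have hbC := hlower.trans (h W Set.inter_subset_right hW)
  rw [ENNReal.mul_le_mul_iff_left (rpow_pos (pos_iff_ne_zero.2 hW0) hWfin).ne'
    (rpow_ne_top_of_nonneg (by positivity) hWfin)] at hbC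
  exact hCb.not_ge (ENNReal.coe_le_coe.1 hbC)

namespace MeasureTheory

variable {Ω 𝕜 X Y : Type*} [MeasurableSpace Ω] {μ : Measure Ω} [NontriviallyNormedField 𝕜]
  [NormedAddCommGroup X] [NormedSpace 𝕜 X] [NormedAddCommGroup Y] [NormedSpace 𝕜 Y]
  {p : ℝ≥0∞} [Fact (1 ≤ p)]

def Lp.IsMultiplicationOperator (S : Lp X p μ →L[𝕜] Lp Y p μ) (B : Ω → X →L[𝕜] Y) : Prop :=
  ∀ f : Lp X p μ, ∀ᵐ s ∂μ, S f s = B s (f s)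

namespace Lp.IsMultiplicationOperator

variable {S : Lp X p μ →L[𝕜] Lp Y p μ} {B : Ω → X →L[𝕜] Y}

theorem opNorm_le (hS : IsMultiplicationOperator S B) {M : ℝ} (hM : 0 ≤ M)
    (hB : ∀ᵐ s ∂μ, ‖B s‖ ≤ M) : ‖S‖ ≤ M :=
  S.opNorm_le_bound hM fun f => Lp.norm_le_mul_norm_of_ae_le_mul <| by
    filter_upwards [hS f, hB] with s hSf hBs
    rw [hSf]
    exact (B s).le_of_opNorm_le hBs _

theorem apply_indicatorConstLp_ae_eq (hS : IsMultiplicationOperator S B) {W : Set Ω}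
    (hW : MeasurableSet W) (hμW : μ W ≠ ∞) (x : X) :
    S (indicatorConstLp p hW hμW x) =ᵐ[μ] W.indicator fun s => B s x := by
  have hind : indicatorConstLp p hW hμW x =ᵐ[μ] W.indicator fun _ => x := indicatorConstLp_coeFn
  filter_upwards [hS (indicatorConstLp p hW hμW x), hind] with s hSs hs
  by_cases hsW : s ∈ W <;> simp [hSs, hs, hsW]

theorem ae_norm_apply_le [SigmaFinite μ] (hS : IsMultiplicationOperator S B) (x : X) :
    ∀ᵐ s ∂μ, ‖B s x‖ ≤ ‖S‖ * ‖x‖ := by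
  have hp : p ≠ 0 := (zero_lt_one.trans_le Fact.out).ne'
  refine ae_of_forall_measure_lt_top_ae_restrict _ fun E hE hμE => ?_
  set g : Ω → Y := ⇑(S (indicatorConstLp p hE hμE.ne x))
  have hgE : g =ᵐ[μ] E.indicator fun s => B s x := hS.apply_indicatorConstLp_ae_eq hE hμE.ne x
  have hg : ∀ᵐ s ∂μ.restrict E, ‖g s‖₊ ≤ ‖S‖₊ * ‖x‖₊ := by
    refine ae_restrict_nnnorm_le_of_eLpNorm_indicator_le hp (Lp.stronglyMeasurable _) hE hμE.ne
      fun W hWE hW => ?_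
    have hμW : μ W ≠ ∞ := measure_ne_top_of_subset hWE hμE.ne
    have hWg : W.indicator g =ᵐ[μ] S (indicatorConstLp p hW hμW x) := by
      filter_upwards [hgE, hS.apply_indicatorConstLp_ae_eq hW hμW x] with s hgs hWs
      by_cases hsW : s ∈ W
      · simp [hsW, hgs, hWs, hWE hsW]
      · simp [hsW, hWs]
    calc eLpNorm (W.indicator g) p μ = ‖S (indicatorConstLp p hW hμW x)‖ₑ := by
          rw [eLpNorm_congr_ae hWg, Lp.enorm_def]
      _ ≤ ‖S‖ₑ * ‖indicatorConstLp p hW hμW x‖ₑ := S.le_opENorm _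
      _ ≤ ‖S‖ₑ * (‖x‖ₑ * μ W ^ (1 / p.toReal)) := by
          rw [Lp.enorm_def, eLpNorm_congr_ae indicatorConstLp_coeFn]
          gcongr
          exact eLpNorm_indicator_const_le (μ := μ) x p
      _ = ↑(‖S‖₊ * ‖x‖₊) * μ W ^ (1 / p.toReal) := by
          rw [ENNReal.coe_mul, mul_assoc]; rfl
  filter_upwards [hg, ae_restrict_of_ae hgE, ae_restrict_mem hE] with s hgs hgEs hsE
  rw [hgEs, Set.indicator_of_mem hsE] at hgs
  exact_mod_cast hgs

theorem ae_opNorm_le [SigmaFinite μ] [TopologicalSpace.SeparableSpace X]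
    (hS : IsMultiplicationOperator S B) : ∀ᵐ s ∂μ, ‖B s‖ ≤ ‖S‖ := by
  obtain ⟨D, hDc, hD⟩ := TopologicalSpace.exists_countable_dense X
  filter_upwards [(ae_ball_iff hDc).2 fun x _ => hS.ae_norm_apply_le x] with s hs
  exact (B s).opNorm_le_of_dense hD (norm_nonneg S) hs

end Lp.IsMultiplicationOperator

end MeasureTheory

theorem stmt18_general {Ω X : Type*} [MeasurableSpace Ω] [NormedAddCommGroup X]
    [NormedSpace ℂ X] [TopologicalSpace.SeparableSpace X]
    (μ : Measure Ω) [SigmaFinite μ]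
    (p : ℝ≥0∞) [Fact (1 ≤ p)]
    (T : ℝ → Lp X p μ →L[ℂ] Lp X p μ)
    (A : ℝ → Ω → X →L[ℂ] X)
    (hAcont : ∀ (s : Ω) (x : X), ContinuousOn (fun t => A t s x) (Set.Ici 0))
    (hpt : ∀ t : ℝ, 0 ≤ t → ∀ f : Lp X p μ,
      ∀ᵐ s ∂μ, (T t f : Ω →ₘ[μ] X) s = A t s ((f : Ω →ₘ[μ] X) s))
    (M : ℝ) (hM : 0 < M) :
    (∀ t : ℝ, 0 ≤ t → ‖T t‖ ≤ M) ↔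
      ∃ N : Set Ω, μ N = 0 ∧ ∀ s ∈ Nᶜ, ∀ t : ℝ, 0 ≤ t → ‖A t s‖ ≤ M := by
  have hmul : ∀ t, 0 ≤ t → Lp.IsMultiplicationOperator (T t) (A t) := hpt
  constructor
  · intro hT
    have hrat : ∀ᵐ s ∂μ, ∀ q : ℚ, 0 ≤ (q : ℝ) → ‖A q s‖ ≤ M := by
      refine ae_all_iff.2 fun q => ?_
      by_cases hq : 0 ≤ (q : ℝ)
      · filter_upwards [(hmul q hq).ae_opNorm_le] with s hs _ using hs.trans (hT q hq)
      · exact Eventually.of_forall fun _ hq' => absurd hq' hq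
    refine ⟨{s | ¬ ∀ q : ℚ, 0 ≤ (q : ℝ) → ‖A q s‖ ≤ M}, hrat, fun s hs t ht => ?_⟩
    have hsq := not_not.1 hs
    refine (A t s).opNorm_le_bound hM.le fun x => ?_
    have hmaps : Set.MapsTo (fun t => A t s x) (Set.Ici 0) (Metric.closedBall 0 (M * ‖x‖)) := by
      refine (hAcont s x).mapsTo_Ici_of_dense Rat.denseRange_cast Metric.isClosed_closedBall ?_
      rintro _ ⟨⟨q, rfl⟩, hq⟩
      exact mem_closedBall_zero_iff.2 ((A q s).le_of_opNorm_le (hsq q hq.le) x)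
    exact mem_closedBall_zero_iff.1 (hmaps ht)
  · rintro ⟨N, hN, hA⟩ t ht
    exact (hmul t ht).opNorm_le hM.le <|
      (measure_eq_zero_iff_ae_notMem.1 hN).mono fun s hs => hA s hs t ht

/-- For a multiplication semigroup on `L^p(Ω,X)` with pointwise
semigroups `(e^{tA(s)})` depending continuously on `t`, and `M > 0`:
`‖e^{t𝓐}‖ ≤ M` for all `t ≥ 0` iff there is a single null set `N` with
`‖e^{tA(s)}‖ ≤ M` for all `s ∉ N` and all `t ≥ 0`. -/
theorem stmt18 {Ω X : Type*} [MeasurableSpace Ω] [NormedAddCommGroup X]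
    [NormedSpace ℂ X] [CompleteSpace X] [TopologicalSpace.SeparableSpace X]
    (μ : Measure Ω) [SigmaFinite μ]
    (hfsp : ∀ Y : Set Ω, MeasurableSet Y → 0 < μ Y →
      ∃ Z : Set Ω, MeasurableSet Z ∧ Z ⊆ Y ∧ 0 < μ Z ∧ μ Z < ⊤)
    (p : ℝ≥0∞) [Fact (1 ≤ p)]
    (T : ℝ → Lp X p μ →L[ℂ] Lp X p μ)
    (hT0 : T 0 = 1)
    (hTadd : ∀ t r : ℝ, 0 ≤ t → 0 ≤ r → T (t + r) = (T t).comp (T r))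
    (hTcont : ∀ f : Lp X p μ, ContinuousOn (fun t => T t f) (Set.Ici 0))
    (A : ℝ → Ω → X →L[ℂ] X)
    (hAcont : ∀ (s : Ω) (x : X), ContinuousOn (fun t => A t s x) (Set.Ici 0))
    (hpt : ∀ t : ℝ, 0 ≤ t → ∀ f : Lp X p μ,
      ∀ᵐ s ∂μ, (T t f : Ω →ₘ[μ] X) s = A t s ((f : Ω →ₘ[μ] X) s))
    (M : ℝ) (hM : 0 < M) :
    (∀ t : ℝ, 0 ≤ t → ‖T t‖ ≤ M) ↔
      ∃ N : Set Ω, μ N = 0 ∧ ∀ s ∈ Nᶜ, ∀ t : ℝ, 0 ≤ t → ‖A t s‖ ≤ M :=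
  stmt18_general μ p T A hAcont hpt M hM
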